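/- For every integer N ≥ 1, ∑_{γ ∈ C_N} log(d_γ/a_γ) = ψ(N)(log N − 2λ_N), where for γ = [[a,b],[0,d]] ∈ C_N we write a_γ = a and d_γ = d. -/

import Mathlib

open Complex

noncomputable section

/-- `q = e^{2πiz}`. -/
def qexp (z : ℂ) : ℂ := Complex.exp (2 * Real.pi * Complex.I * z)

/-- The modular discriminant `Δ`, normalized by `Δ(τ) = q ∏_{n≥1} (1-qⁿ)²⁴`, `q = e^{2πiτ}`. -/
def Delta (z : ℂ) : ℂ := qexp z * ∏' n : ℕ, (1 - qexp z ^ (n + 1)) ^ 24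

/-- The normalized Eisenstein series `E₄(τ) = 1 + 240 ∑_{n≥1} σ₃(n) qⁿ`. -/
def E4 (z : ℂ) : ℂ :=
  1 + 240 * ∑' n : ℕ, (∑ d ∈ (n + 1).divisors, (d : ℂ) ^ 3) * qexp z ^ (n + 1)

/-- The modular `j`-function, `j = E₄³ / Δ`. -/
def jfun (z : ℂ) : ℂ := E4 z ^ 3 / Delta z

/-- `ψ(N) = N ∏_{p ∣ N} (1 + 1/p)`. -/
def psi (N : ℕ) : ℝ := N * ∏ p ∈ N.primeFactors, (1 + (p : ℝ)⁻¹)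

/-- `λ_N = ∑_{pⁿ ‖ N} (pⁿ-1)/(p^{n-1}(p²-1)) log p`. -/
def lam (N : ℕ) : ℝ :=
  ∑ p ∈ N.primeFactors,
    (((p : ℝ) ^ (N.factorization p) - 1) /
        ((p : ℝ) ^ (N.factorization p - 1) * ((p : ℝ) ^ 2 - 1))) * Real.log p

/-- The set `C_N` of matrices `[[a,b],[0,d]]` with `ad = N`, `a ≥ 1`, `0 ≤ b ≤ d-1`,
`gcd(a,b,d) = 1`, encoded as triples `(a, b, d)`. -/
def CN (N : ℕ) : Finset (ℕ × ℕ × ℕ) :=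
  (Finset.range (N + 1) ×ˢ Finset.range (N + 1) ×ˢ Finset.range (N + 1)).filter
    fun x => x.1 * x.2.2 = N ∧ 1 ≤ x.1 ∧ x.2.1 < x.2.2 ∧
      Nat.gcd x.1 (Nat.gcd x.2.1 x.2.2) = 1

/-- `τ_γ = (aτ+b)/d` for `γ = (a,b,d)`. -/
def act (γ : ℕ × ℕ × ℕ) (z : ℂ) : ℂ := ((γ.1 : ℂ) * z + (γ.2.1 : ℂ)) / (γ.2.2 : ℂ)

/-- `S_N(τ) = ∑_{γ ∈ C_N} log max {1, |j(τ_γ)|}`. -/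
def SN (N : ℕ) (z : ℂ) : ℝ :=
  ∑ γ ∈ CN N, Real.log (max 1 (‖jfun (act γ z)‖))

/-- Height of an integer polynomial in two variables: `log` of the maximum absolute value
of its coefficients. -/
def heightZ (Φ : MvPolynomial (Fin 2) ℤ) : ℝ :=
  Real.log ((Φ.support.sup fun m => (Φ.coeff m).natAbs : ℕ) : ℝ)

/-- Height of a complex polynomial in one variable: `log` of the maximum absolute value
of its coefficients. -/
def heightC (P : Polynomial ℂ) : ℝ :=
  Real.log ((P.support.sup fun n => ‖P.coeff n‖₊ : NNReal) : ℝ)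

/-- `Φ` is the modular polynomial of level `N`: for all `τ ∈ ℍ`,
`Φ(X, j(τ)) = ∏_{γ ∈ C_N} (X - j(τ_γ))`. -/
def IsModularPoly (N : ℕ) (Φ : MvPolynomial (Fin 2) ℤ) : Prop :=
  ∀ z : ℂ, 0 < z.im →
    MvPolynomial.aeval ![Polynomial.X, Polynomial.C (jfun z)] Φ =
      ∏ γ ∈ CN N, (Polynomial.X - Polynomial.C (jfun (act γ z)))

/-- Möbius action of `SL₂(ℤ)` on the upper half-plane. -/
def moebius (g : Matrix.SpecialLinearGroup (Fin 2) ℤ) (z : ℂ) : ℂ :=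
  (((g : Matrix (Fin 2) (Fin 2) ℤ) 0 0 : ℂ) * z + ((g : Matrix (Fin 2) (Fin 2) ℤ) 0 1 : ℂ)) /
    (((g : Matrix (Fin 2) (Fin 2) ℤ) 1 0 : ℂ) * z + ((g : Matrix (Fin 2) (Fin 2) ℤ) 1 1 : ℂ))

/-- The standard fundamental domain `𝓕` for `SL₂(ℤ)` acting on `ℍ`. -/
def FD : Set ℂ :=
  {z | 0 < z.im ∧ 1 ≤ ‖z‖ ∧ -(1/2 : ℝ) < z.re ∧ z.re ≤ 1/2 ∧
    (‖z‖ = 1 → 0 ≤ z.re)}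

/-- `w` is the representative in `𝓕` of the `SL₂(ℤ)`-orbit of `z`. -/
def IsRep (z w : ℂ) : Prop :=
  w ∈ FD ∧ ∃ g : Matrix.SpecialLinearGroup (Fin 2) ℤ, moebius g z = w
namespace SumLogAux

open Finset

/-- weight: number of valid `b` for divisor `a` of `N`. -/
def w (N a : ℕ) : ℕ := (N / a) / Nat.gcd a (N / a) * (Nat.gcd a (N / a)).totient

lemma card_coprime_filter {g d : ℕ} (hg : 0 < g) (hgd : g ∣ d) :
    ((Finset.range d).filter (fun b => g.Coprime b)).card = d / g * g.totient := by
  obtain ⟨m, rfl⟩ := hgd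
  rw [Nat.mul_div_cancel_left _ hg]
  induction m with
  | zero => simp
  | succ k ih =>
    have hsplit : Finset.range (g * (k + 1)) =
        Finset.range (g * k) ∪ Finset.Ico (g * k) (g * k + g) := by
      rw [Finset.range_eq_Ico, Finset.range_eq_Ico, Finset.Ico_union_Ico_eq_Ico (Nat.zero_le _) (Nat.le_add_right _ _)]
      congr 1
    rw [hsplit, Finset.filter_union, Finset.card_union_of_disjoint, ih,
      Nat.filter_coprime_Ico_eq_totient g (g * k)]
    · ring
    · exact Finset.disjoint_filter_filter
        (by rw [Finset.range_eq_Ico]; exact Finset.Ico_disjoint_Ico_consecutive 0 (g*k) (g*k+g))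

lemma mem_CN {N : ℕ} (hN : 1 ≤ N) {γ : ℕ × ℕ × ℕ} :
    γ ∈ CN N ↔ γ.1 * γ.2.2 = N ∧ 1 ≤ γ.1 ∧ γ.2.1 < γ.2.2 ∧
      Nat.gcd γ.1 (Nat.gcd γ.2.1 γ.2.2) = 1 := by
  obtain ⟨a, b, d⟩ := γ
  simp only [CN, Finset.mem_filter, Finset.mem_product, Finset.mem_range]
  constructor
  · rintro ⟨_, h⟩; exact h
  · rintro ⟨h1, h2, h3, h4⟩
    have hd : d ≤ N := Nat.le_of_dvd hN ⟨a, by rw [← h1]; ring⟩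
    have ha : a ≤ N := Nat.le_of_dvd hN ⟨d, h1.symm⟩
    exact ⟨⟨by omega, by omega, by omega⟩, h1, h2, h3, h4⟩

lemma sum_CN_eq {N : ℕ} (hN : 1 ≤ N) (F : ℕ → ℝ) :
    ∑ γ ∈ CN N, F γ.1 = ∑ a ∈ N.divisors, (w N a : ℝ) * F a := by
  have hN0 : N ≠ 0 := by omega
  have key : ∑ γ ∈ CN N, F γ.1 =
      ∑ x ∈ (N.divisors).sigma
        (fun a => (Finset.range (N / a)).filter fun b => (Nat.gcd a (N / a)).Coprime b),
        F x.1 := by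
    refine Finset.sum_nbij' (fun γ => ⟨γ.1, γ.2.1⟩) (fun x => (x.1, x.2, N / x.1))
      ?_ ?_ ?_ ?_ ?_
    · intro γ hγ
      rw [mem_CN hN] at hγ
      obtain ⟨h1, h2, h3, h4⟩ := hγ
      have hdv : γ.1 ∣ N := ⟨γ.2.2, h1.symm⟩
      have hda : N / γ.1 = γ.2.2 := by
        rw [← h1, Nat.mul_div_cancel_left _ (by omega)]
      simp only [Finset.mem_sigma, Nat.mem_divisors, Finset.mem_filter, Finset.mem_range, hda]
      refine ⟨⟨hdv, hN0⟩, h3, ?_⟩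
      have := h4
      rwa [Nat.gcd_comm γ.2.1 γ.2.2, ← Nat.gcd_assoc] at this
    · intro x hx
      simp only [Finset.mem_sigma, Nat.mem_divisors, Finset.mem_filter, Finset.mem_range] at hx
      obtain ⟨⟨hdv, _⟩, hb, hcop⟩ := hx
      have ha0 : 0 < x.1 := Nat.pos_of_dvd_of_pos hdv (by omega)
      rw [mem_CN hN]
      refine ⟨Nat.mul_div_cancel' hdv, ha0, hb, ?_⟩
      rw [Nat.gcd_comm x.2 (N / x.1), ← Nat.gcd_assoc]
      exact hcop
    · intro γ hγ
      rw [mem_CN hN] at hγ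
      obtain ⟨h1, h2, _, _⟩ := hγ
      have : N / γ.1 = γ.2.2 := by rw [← h1, Nat.mul_div_cancel_left _ (by omega)]
      ext <;> simp [this]
    · intro x hx; rfl
    · intro γ hγ; rfl
  rw [key, Finset.sum_sigma]
  refine Finset.sum_congr rfl fun a ha => ?_
  rw [Nat.mem_divisors] at ha
  have ha0 : 0 < a := Nat.pos_of_dvd_of_pos ha.1 (by omega)
  have hg0 : 0 < Nat.gcd a (N / a) := Nat.gcd_pos_of_pos_left _ ha0
  have hgd : Nat.gcd a (N / a) ∣ N / a := Nat.gcd_dvd_right _ _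
  dsimp only
  rw [Finset.sum_const, card_coprime_filter hg0 hgd, nsmul_eq_mul, w]


lemma w_mul {m n a b : ℕ} (hmn : m.Coprime n) (ha : a ∣ m) (hb : b ∣ n) :
    w (m * n) (a * b) = w m a * w n b := by
  have ha' : m / a ∣ m := Nat.div_dvd_of_dvd ha
  have hb' : n / b ∣ n := Nat.div_dvd_of_dvd hb
  have hdiv : m * n / (a * b) = m / a * (n / b) := (Nat.div_mul_div_comm ha hb).symm
  have hc1 : Nat.Coprime b (m / a) := (hmn.symm.coprime_dvd_left hb).coprime_dvd_right ha'
  have hc2 : Nat.Coprime a (n / b) := (hmn.coprime_dvd_left ha).coprime_dvd_right hb'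
  have hc3 : Nat.Coprime (m / a) (n / b) := (hmn.coprime_dvd_left ha').coprime_dvd_right hb'
  have hgcd : Nat.gcd (a * b) (m / a * (n / b)) = Nat.gcd a (m / a) * Nat.gcd b (n / b) := by
    rw [hc3.gcd_mul (a * b), hc1.gcd_mul_right_cancel a, hc2.gcd_mul_left_cancel b]
  have hg : Nat.Coprime (Nat.gcd a (m / a)) (Nat.gcd b (n / b)) :=
    (hmn.coprime_dvd_left ((Nat.gcd_dvd_left a (m / a)).trans ha)).coprime_dvd_right
      ((Nat.gcd_dvd_left b (n / b)).trans hb)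
  rw [w, w, w, hdiv, hgcd, Nat.totient_mul hg,
    ← Nat.div_mul_div_comm (Nat.gcd_dvd_right a (m / a)) (Nat.gcd_dvd_right b (n / b))]
  ring

lemma sum_divisors_mul_coprime {m n : ℕ} (h : m.Coprime n) (hm : m ≠ 0) (hn : n ≠ 0)
    (f : ℕ → ℝ) :
    ∑ d ∈ (m * n).divisors, f d = ∑ a ∈ m.divisors, ∑ b ∈ n.divisors, f (a * b) := by
  rw [← Finset.sum_product']
  have key : ∀ d, d ∣ m * n → Nat.gcd d m * Nat.gcd d n = d := by
    intro d hd
    rw [← h.gcd_mul d, Nat.gcd_eq_left hd]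
  refine Finset.sum_nbij' (fun d => (Nat.gcd d m, Nat.gcd d n)) (fun p => p.1 * p.2)
    ?_ ?_ ?_ ?_ ?_
  · intro d hd
    rw [Nat.mem_divisors] at hd
    simp only [Finset.mem_product, Nat.mem_divisors]
    exact ⟨⟨Nat.gcd_dvd_right _ _, hm⟩, ⟨Nat.gcd_dvd_right _ _, hn⟩⟩
  · intro p hp
    simp only [Finset.mem_product, Nat.mem_divisors] at hp
    exact Nat.mem_divisors.mpr ⟨mul_dvd_mul hp.1.1 hp.2.1, mul_ne_zero hm hn⟩
  · intro d hd
    rw [Nat.mem_divisors] at hd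
    exact key d hd.1
  · intro p hp
    simp only [Finset.mem_product, Nat.mem_divisors] at hp
    have h1 : Nat.gcd (p.1 * p.2) m = p.1 := by
      rw [(h.symm.coprime_dvd_left hp.2.1).gcd_mul_right_cancel p.1,
        Nat.gcd_eq_left hp.1.1]
    have h2 : Nat.gcd (p.1 * p.2) n = p.2 := by
      rw [(h.coprime_dvd_left hp.1.1).gcd_mul_left_cancel p.2, Nat.gcd_eq_left hp.2.1]
    ext <;> simp [h1, h2]
  · intro d hd
    rw [Nat.mem_divisors] at hd
    rw [key d hd.1]

/-- Total count, as a real number. -/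
def CntR (N : ℕ) : ℝ := ∑ a ∈ N.divisors, (w N a : ℝ)

/-- Weighted sum of `log a`. -/
def GR (N : ℕ) : ℝ := ∑ a ∈ N.divisors, (w N a : ℝ) * Real.log a

lemma CntR_mul {m n : ℕ} (h : m.Coprime n) (hm : m ≠ 0) (hn : n ≠ 0) :
    CntR (m * n) = CntR m * CntR n := by
  rw [CntR, CntR, CntR, sum_divisors_mul_coprime h hm hn, Finset.sum_mul_sum]
  refine Finset.sum_congr rfl fun a ha => Finset.sum_congr rfl fun b hb => ?_
  rw [Nat.mem_divisors] at ha hb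
  rw [w_mul h ha.1 hb.1]
  push_cast
  ring

lemma GR_mul {m n : ℕ} (h : m.Coprime n) (hm : m ≠ 0) (hn : n ≠ 0) :
    GR (m * n) = GR m * CntR n + CntR m * GR n := by
  rw [GR, sum_divisors_mul_coprime h hm hn]
  have : ∀ a ∈ m.divisors, ∀ b ∈ n.divisors,
      (w (m * n) (a * b) : ℝ) * Real.log (a * b : ℕ) =
        ((w m a : ℝ) * Real.log a) * (w n b : ℝ) + (w m a : ℝ) * ((w n b : ℝ) * Real.log b) := by
    intro a ha b hb
    rw [Nat.mem_divisors] at ha hb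
    have ha0 : (a : ℝ) ≠ 0 := Nat.cast_ne_zero.mpr (fun h0 => hm (by simpa [h0] using ha.1))
    have hb0 : (b : ℝ) ≠ 0 := Nat.cast_ne_zero.mpr (fun h0 => hn (by simpa [h0] using hb.1))
    rw [w_mul h ha.1 hb.1]
    push_cast
    rw [Real.log_mul ha0 hb0]
    ring
  rw [Finset.sum_congr rfl fun a ha => Finset.sum_congr rfl fun b hb => this a ha b hb]
  rw [GR, GR, CntR, CntR]
  simp only [Finset.sum_add_distrib, ← Finset.mul_sum, ← Finset.sum_mul]

lemma psi_mul {m n : ℕ} (h : m.Coprime n) (hm : m ≠ 0) (hn : n ≠ 0) :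
    psi (m * n) = psi m * psi n := by
  rw [psi, psi, psi, Nat.Coprime.primeFactors_mul h,
    Finset.prod_union h.disjoint_primeFactors]
  push_cast
  ring

lemma lam_mul {m n : ℕ} (h : m.Coprime n) (hm : m ≠ 0) (hn : n ≠ 0) :
    lam (m * n) = lam m + lam n := by
  rw [lam, lam, lam, Nat.Coprime.primeFactors_mul h,
    Finset.sum_union h.disjoint_primeFactors]
  congr 1
  · refine Finset.sum_congr rfl fun p hp => ?_
    have hpd : p ∣ m := Nat.dvd_of_mem_primeFactors hp
    have hpp : p.Prime := Nat.prime_of_mem_primeFactors hp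
    have hnd : ¬ p ∣ n := (Nat.Prime.coprime_iff_not_dvd hpp).mp (Nat.Coprime.coprime_dvd_left hpd h)
    have : (m * n).factorization p = m.factorization p := by
      rw [Nat.factorization_mul hm hn, Finsupp.add_apply,
        Nat.factorization_eq_zero_of_not_dvd hnd, add_zero]
    rw [this]
  · refine Finset.sum_congr rfl fun p hp => ?_
    have hpd : p ∣ n := Nat.dvd_of_mem_primeFactors hp
    have hpp : p.Prime := Nat.prime_of_mem_primeFactors hp
    have hmd : ¬ p ∣ m := (Nat.Prime.coprime_iff_not_dvd hpp).mp (Nat.Coprime.coprime_dvd_left hpd h.symm)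
    have : (m * n).factorization p = n.factorization p := by
      rw [Nat.factorization_mul hm hn, Finsupp.add_apply,
        Nat.factorization_eq_zero_of_not_dvd hmd, zero_add]
    rw [this]

lemma w_one_left {N : ℕ} : w N 1 = N := by
  simp [w]

lemma w_self {N : ℕ} (hN : 0 < N) : w N N = 1 := by
  simp [w, Nat.div_self hN]

lemma w_pp_mid {p : ℕ} (hp : p.Prime) {n i : ℕ} (h1 : 1 ≤ i) (h2 : i < n) :
    w (p ^ n) (p ^ i) = p ^ (n - i - 1) * (p - 1) := by
  have hdiv : p ^ n / p ^ i = p ^ (n - i) := Nat.pow_div (le_of_lt h2) hp.pos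
  have hgcd : Nat.gcd (p ^ i) (p ^ (n - i)) = p ^ min i (n - i) := by
    rcases le_total i (n - i) with hc | hc
    · rw [Nat.gcd_eq_left (pow_dvd_pow p hc), min_eq_left hc]
    · rw [Nat.gcd_eq_right (pow_dvd_pow p hc), min_eq_right hc]
  have hk1 : 1 ≤ min i (n - i) := le_min h1 (by omega)
  have hkni : min i (n - i) ≤ n - i := min_le_right _ _
  rw [w, hdiv, hgcd, Nat.pow_div hkni hp.pos, Nat.totient_prime_pow hp (by omega)]
  rw [← mul_assoc, ← pow_add]
  congr 2
  omega

lemma cast_w_mid {p : ℕ} (hp : p.Prime) {n i : ℕ} (h1 : 1 ≤ i) (h2 : i < n) :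
    (w (p ^ n) (p ^ i) : ℝ) = (p : ℝ) ^ (n - i - 1) * ((p : ℝ) - 1) := by
  rw [w_pp_mid hp h1 h2, Nat.cast_mul, Nat.cast_pow, Nat.cast_sub hp.one_le, Nat.cast_one]

lemma sumK (x : ℝ) (m : ℕ) :
    (∑ j ∈ Finset.range m, ((m : ℝ) - j) * x ^ j) * (x - 1) =
      (∑ j ∈ Finset.range (m + 1), x ^ j) - (m + 1) := by
  induction m with
  | zero => simp
  | succ k ih =>
    have hstep : ∑ j ∈ Finset.range (k + 1), (((k : ℕ) + 1 : ℝ) - j) * x ^ j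
        = (∑ j ∈ Finset.range k, ((k : ℝ) - j) * x ^ j)
          + ∑ j ∈ Finset.range (k + 1), x ^ j := by
      have : ∀ j : ℕ, (((k : ℕ) + 1 : ℝ) - j) * x ^ j
          = ((k : ℝ) - j) * x ^ j + x ^ j := fun j => by ring
      rw [Finset.sum_congr rfl fun j _ => this j, Finset.sum_add_distrib]
      congr 1
      rw [Finset.sum_range_succ]
      simp
    push_cast
    push_cast at hstep ih
    rw [hstep, Finset.sum_range_succ (fun j => x ^ j) (k + 1)]
    have hg := geom_sum_mul x (k + 1)
    linear_combination ih + hg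

lemma CntR_pp {p : ℕ} (hp : p.Prime) {n : ℕ} (hn : 0 < n) :
    CntR (p ^ n) = (p : ℝ) ^ n + (p : ℝ) ^ (n - 1) := by
  obtain ⟨m, rfl⟩ : ∃ m, n = m + 1 := ⟨n - 1, by omega⟩
  rw [CntR, Nat.sum_divisors_prime_pow hp, Finset.sum_range_succ', Finset.sum_range_succ]
  have h0 : (w (p ^ (m + 1)) (p ^ 0) : ℝ) = (p : ℝ) ^ (m + 1) := by
    rw [pow_zero, w_one_left]; push_cast; ring
  have hlast : (w (p ^ (m + 1)) (p ^ (m + 1)) : ℝ) = 1 := by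
    rw [w_self (pow_pos hp.pos _)]; norm_num
  have hmid : ∀ i ∈ Finset.range m, (w (p ^ (m + 1)) (p ^ (i + 1)) : ℝ)
      = (p : ℝ) ^ (m - 1 - i) * ((p : ℝ) - 1) := by
    intro i hi
    rw [Finset.mem_range] at hi
    rw [cast_w_mid hp (by omega) (by omega)]
    have : m + 1 - (i + 1) - 1 = m - 1 - i := by omega
    rw [this]
  have hrefl : ∑ i ∈ Finset.range m, (p : ℝ) ^ (m - 1 - i) * ((p : ℝ) - 1)
      = ∑ j ∈ Finset.range m, (p : ℝ) ^ j * ((p : ℝ) - 1) :=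
    Finset.sum_range_reflect (fun j => (p : ℝ) ^ j * ((p : ℝ) - 1)) m
  rw [Finset.sum_congr rfl hmid, hrefl, hlast, h0]
  rw [← Finset.sum_mul]
  have hg := geom_sum_mul (p : ℝ) m
  have hmm : (m + 1) - 1 = m := by omega
  rw [hmm]
  linear_combination hg

lemma GR_pp {p : ℕ} (hp : p.Prime) (m : ℕ) :
    GR (p ^ (m + 1)) * ((p : ℝ) - 1) = ((p : ℝ) ^ (m + 1) - 1) * Real.log p := by
  rw [GR, Nat.sum_divisors_prime_pow hp, Finset.sum_range_succ', Finset.sum_range_succ]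
  have h0 : (w (p ^ (m + 1)) (p ^ 0) : ℝ) * Real.log ((p : ℕ) ^ 0 : ℕ) = 0 := by
    norm_num
  have hlast : (w (p ^ (m + 1)) (p ^ (m + 1)) : ℝ) * Real.log ((p : ℕ) ^ (m + 1) : ℕ)
      = ((m : ℝ) + 1) * Real.log p := by
    rw [w_self (pow_pos hp.pos _)]
    push_cast
    rw [Real.log_pow]
    push_cast
    ring
  have hmid : ∀ i ∈ Finset.range m,
      (w (p ^ (m + 1)) (p ^ (i + 1)) : ℝ) * Real.log ((p : ℕ) ^ (i + 1) : ℕ)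
      = (p : ℝ) ^ (m - 1 - i) * (((p : ℝ) - 1) *
          (((m : ℝ) - ((m - 1 - i : ℕ) : ℝ)) * Real.log p)) := by
    intro i hi
    rw [Finset.mem_range] at hi
    have h1 : m + 1 - (i + 1) - 1 = m - 1 - i := by omega
    have h2 : ((m - 1 - i : ℕ) : ℝ) = (m : ℝ) - 1 - (i : ℝ) := by
      have he : m - 1 - i = m - (i + 1) := by omega
      rw [he, Nat.cast_sub (by omega)]
      push_cast
      ring
    rw [cast_w_mid hp (by omega) (by omega), h1, h2]
    push_cast
    rw [Real.log_pow]
    push_cast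
    ring
  have hrefl : ∑ i ∈ Finset.range m, (p : ℝ) ^ (m - 1 - i) * (((p : ℝ) - 1) *
          (((m : ℝ) - ((m - 1 - i : ℕ) : ℝ)) * Real.log p))
      = ∑ j ∈ Finset.range m, (p : ℝ) ^ j * (((p : ℝ) - 1) *
          (((m : ℝ) - (j : ℝ)) * Real.log p)) :=
    Finset.sum_range_reflect
      (fun j => (p : ℝ) ^ j * (((p : ℝ) - 1) * (((m : ℝ) - (j : ℝ)) * Real.log p))) m
  rw [Finset.sum_congr rfl hmid, hrefl, hlast, h0]
  have hfac : ∀ j : ℕ, (p : ℝ) ^ j * (((p : ℝ) - 1) * (((m : ℝ) - (j : ℝ)) * Real.log p))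
      = (((m : ℝ) - j) * (p : ℝ) ^ j) * (((p : ℝ) - 1) * Real.log p) := fun j => by ring
  rw [Finset.sum_congr rfl fun j _ => hfac j, ← Finset.sum_mul]
  have h1 := sumK (p : ℝ) m
  have h2 := geom_sum_mul (p : ℝ) (m + 1)
  linear_combination (Real.log p * ((p : ℝ) - 1)) * h1 + Real.log p * h2

lemma psi_pp {p : ℕ} (hp : p.Prime) {n : ℕ} (hn : 0 < n) :
    psi (p ^ n) = (p : ℝ) ^ n + (p : ℝ) ^ (n - 1) := by
  obtain ⟨m, rfl⟩ : ∃ m, n = m + 1 := ⟨n - 1, by omega⟩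
  have hp0 : (p : ℝ) ≠ 0 := Nat.cast_ne_zero.mpr hp.pos.ne'
  rw [psi, Nat.primeFactors_prime_pow (by omega) hp, Finset.prod_singleton]
  have : (m + 1) - 1 = m := by omega
  rw [this]
  push_cast
  field_simp
  ring

lemma lam_pp {p : ℕ} (hp : p.Prime) {n : ℕ} (hn : 0 < n) :
    lam (p ^ n) = (((p : ℝ) ^ n - 1) / ((p : ℝ) ^ (n - 1) * ((p : ℝ) ^ 2 - 1))) * Real.log p := by
  rw [lam, Nat.primeFactors_prime_pow (by omega) hp, Finset.sum_singleton,
    hp.factorization_pow, Finsupp.single_eq_same]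

lemma CntR_eq_psi : ∀ N : ℕ, N ≠ 0 → CntR N = psi N := by
  intro N
  induction N using Nat.recOnPosPrimePosCoprime with
  | prime_pow p n hpp hn =>
    intro _
    have hp' : p.Prime := hpp
    rw [CntR_pp hp' hn, psi_pp hp' hn]
  | zero => intro h; exact absurd rfl h
  | one =>
    intro _
    simp [CntR, psi, w]
  | coprime a b ha hb hab iha ihb =>
    intro _
    rw [CntR_mul hab (by omega) (by omega), psi_mul hab (by omega) (by omega),
      iha (by omega), ihb (by omega)]

lemma GR_eq : ∀ N : ℕ, N ≠ 0 → GR N = psi N * lam N := by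
  intro N
  induction N using Nat.recOnPosPrimePosCoprime with
  | prime_pow p n hpp hn =>
    intro _
    have hp' : p.Prime := hpp
    obtain ⟨m, rfl⟩ : ∃ m, n = m + 1 := ⟨n - 1, by omega⟩
    have hp1 : (1 : ℝ) < (p : ℝ) := by exact_mod_cast hp'.one_lt
    have hne : (p : ℝ) - 1 ≠ 0 := by linarith
    have hp0 : (p : ℝ) ≠ 0 := by linarith
    have key := GR_pp hp' m
    rw [psi_pp hp' hn, lam_pp hp' hn]
    have hmm : (m + 1) - 1 = m := by omega
    rw [hmm]
    have hpow : (p : ℝ) ^ m ≠ 0 := pow_ne_zero _ hp0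
    have hp2 : (p : ℝ) ^ 2 - 1 ≠ 0 := by nlinarith
    field_simp
    linear_combination ((p : ℝ) ^ m * ((p : ℝ) + 1)) * key
  | zero => intro h; exact absurd rfl h
  | one =>
    intro _
    simp [GR, psi, lam, w]
  | coprime a b ha hb hab iha ihb =>
    intro _
    rw [GR_mul hab (by omega) (by omega), CntR_eq_psi a (by omega), CntR_eq_psi b (by omega),
      iha (by omega), ihb (by omega), psi_mul hab (by omega) (by omega),
      lam_mul hab (by omega) (by omega)]
    ring

end SumLogAux
/-- `∑_{γ ∈ C_N} log(d_γ/a_γ) = ψ(N)(log N − 2λ_N)`. -/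
theorem sum_log_d_div_a (N : ℕ) (hN : 1 ≤ N) :
    ∑ γ ∈ CN N, Real.log ((γ.2.2 : ℝ) / (γ.1 : ℝ)) = psi N * (Real.log N - 2 * lam N) := by
  have hN0 : N ≠ 0 := by omega
  have step1 : ∀ γ ∈ CN N, Real.log ((γ.2.2 : ℝ) / (γ.1 : ℝ))
      = (fun a : ℕ => Real.log N - 2 * Real.log a) γ.1 := by
    intro γ hγ
    rw [SumLogAux.mem_CN hN] at hγ
    obtain ⟨h1, h2, h3, _⟩ := hγ
    have ha0 : (0 : ℝ) < γ.1 := by exact_mod_cast h2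
    have hd0 : (0 : ℝ) < γ.2.2 := by
      have : 0 < γ.2.2 := by omega
      exact_mod_cast this
    have hNad : (N : ℝ) = (γ.1 : ℝ) * (γ.2.2 : ℝ) := by exact_mod_cast h1.symm
    rw [Real.log_div (ne_of_gt hd0) (ne_of_gt ha0)]
    simp only []
    rw [hNad, Real.log_mul (ne_of_gt ha0) (ne_of_gt hd0)]
    ring
  rw [Finset.sum_congr rfl step1, SumLogAux.sum_CN_eq hN (fun a => Real.log N - 2 * Real.log a)]
  have expand : ∀ a : ℕ, (SumLogAux.w N a : ℝ) * (Real.log N - 2 * Real.log a)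
      = (SumLogAux.w N a : ℝ) * Real.log N - 2 * ((SumLogAux.w N a : ℝ) * Real.log a) :=
    fun a => by ring
  rw [Finset.sum_congr rfl fun a _ => expand a, Finset.sum_sub_distrib,
    ← Finset.sum_mul, ← Finset.mul_sum]
  have e1 : ∑ a ∈ N.divisors, (SumLogAux.w N a : ℝ) = psi N := SumLogAux.CntR_eq_psi N hN0
  have e2 : ∑ a ∈ N.divisors, (SumLogAux.w N a : ℝ) * Real.log a = psi N * lam N :=
    SumLogAux.GR_eq N hN0
  rw [e1, e2]
  ring
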